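/- arXiv:2011.11768 — 4 statements merged into one kernel-verified Lean document; each statement's English description precedes it below -/
import Mathlib

section
/- Suppose all eight social alignment parameters s₁₁, s₁₂, s₂₁, s₂₂, s̃₁₁, s̃₁₂, s̃₂₁, s̃₂₂ are positive and all four mutation rates m₁, m̃₁, m₂, m̃₂ lie in the interval [0, 1]. Then the general two-strategy, two-population convergence–divergence game has at least one equilibrium in the unit square: there exists (x, y) ∈ [0,1] × [0,1] with G₁(x,y) = 0 and G₂(x,y) = 0. -/
/-!
On the unit square `G1` is nonnegative on the edge `x = 0` and nonpositive on `x = 1`, and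
`G2` is nonnegative on `y = 0` and nonpositive on `y = 1`: a Poincaré–Miranda configuration.
Instead of the general theorem we use that `G1` is affine in `y`. When no mutation rate vanishes and
`m1 + mt1 ≠ 1`, along every vertical line `G1` changes sign at most once, always in the same
direction, so the height of this sign change is a continuous curve joining two opposite corners of
the square; the intermediate value theorem for `G2` along that curve gives the equilibrium.
In the remaining cases `G1` or `G2` vanishes on a whole vertical or horizontal segment, and the
intermediate value theorem on that segment suffices.
-/

noncomputable def G1 (s11 s12 st11 st12 m1 mt1 : ℝ) (x y : ℝ) : ℝ :=
  ((1 - x) - mt1) * x * (s11 * x + s12 * (1 - y) * x) -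
    (x - m1) * (1 - x) * (st11 * (1 - x) + st12 * y * (1 - x))

noncomputable def G2 (s21 s22 st21 st22 m2 mt2 : ℝ) (x y : ℝ) : ℝ :=
  ((1 - y) - mt2) * y * (s22 * y + s21 * (1 - x) * y) -
    (y - m2) * (1 - y) * (st22 * (1 - y) + st21 * x * (1 - y))

open Set Filter Topology Function

def CrossesDownOn (φ : ℝ → ℝ) (s : Set ℝ) : Prop :=
  ∀ ⦃y⦄, y ∈ s → ∀ ⦃y'⦄, y' ∈ s → y < y' → 0 ≤ φ y' → 0 < φ y

def CrossesUpOn (φ : ℝ → ℝ) (s : Set ℝ) : Prop :=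
  ∀ ⦃y⦄, y ∈ s → ∀ ⦃y'⦄, y' ∈ s → y < y' → 0 ≤ φ y → 0 < φ y'

theorem CrossesUpOn.crossesDownOn_comp_one_sub {φ : ℝ → ℝ} (h : CrossesUpOn φ (Icc 0 1)) :
    CrossesDownOn (fun y => φ (1 - y)) (Icc 0 1) := fun y hy y' hy' hlt hy'φ =>
  h (Icc.mem_iff_one_sub_mem.1 hy') (Icc.mem_iff_one_sub_mem.1 hy) (by linarith) hy'φ

noncomputable def crossingHeight (f : ℝ → ℝ → ℝ) (x : ℝ) : ℝ :=
  sSup (insert 0 {y ∈ Icc (0 : ℝ) 1 | 0 ≤ f x y})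

section crossingHeight

variable {f : ℝ → ℝ → ℝ} {x y : ℝ}

theorem bddAbove_crossingSet :
    BddAbove (insert 0 {y ∈ Icc (0 : ℝ) 1 | 0 ≤ f x y}) :=
  ⟨1, forall_mem_insert.2 ⟨zero_le_one, fun _ hy => hy.1.2⟩⟩

theorem le_crossingHeight (hy : y ∈ Icc (0 : ℝ) 1) (h : 0 ≤ f x y) :
    y ≤ crossingHeight f x :=
  le_csSup bddAbove_crossingSet (mem_insert_of_mem _ ⟨hy, h⟩)

theorem crossingHeight_mem_Icc : crossingHeight f x ∈ Icc (0 : ℝ) 1 :=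
  ⟨le_csSup bddAbove_crossingSet (mem_insert _ _),
    csSup_le (insert_nonempty _ _) (forall_mem_insert.2 ⟨zero_le_one, fun _ hy => hy.1.2⟩)⟩

theorem crossingHeight_eq_one (h : 0 ≤ f x 1) : crossingHeight f x = 1 :=
  le_antisymm crossingHeight_mem_Icc.2 (le_crossingHeight (right_mem_Icc.2 zero_le_one) h)

theorem crossingHeight_eq_zero (h : ∀ y ∈ Icc (0 : ℝ) 1, f x y < 0) :
    crossingHeight f x = 0 :=
  le_antisymm (csSup_le (insert_nonempty _ _)
    (forall_mem_insert.2 ⟨le_rfl, fun y hy => absurd hy.2 (h y hy.1).not_ge⟩))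
    crossingHeight_mem_Icc.1

theorem pos_of_lt_crossingHeight (hf : CrossesDownOn (f x) (Icc 0 1)) (hy : 0 ≤ y)
    (hlt : y < crossingHeight f x) : 0 < f x y := by
  obtain ⟨z, hz, hyz⟩ := exists_lt_of_lt_csSup (insert_nonempty _ _) hlt
  rcases hz with rfl | ⟨hz, hfz⟩
  · exact absurd hy hyz.not_ge
  · exact hf ⟨hy, hyz.le.trans hz.2⟩ hz hyz hfz

theorem neg_of_crossingHeight_lt (hy : y ≤ 1) (hlt : crossingHeight f x < y) : f x y < 0 :=
  not_le.1 fun h =>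
    (le_crossingHeight ⟨crossingHeight_mem_Icc.1.trans hlt.le, hy⟩ h).not_gt hlt

theorem continuousOn_crossingHeight (hf : Continuous (uncurry f))
    (hcross : ∀ x ∈ Icc (0 : ℝ) 1, CrossesDownOn (f x) (Icc 0 1)) :
    ContinuousOn (crossingHeight f) (Icc 0 1) := by
  intro x₀ hx₀
  rw [ContinuousWithinAt, tendsto_order]
  constructor
  · intro a ha
    rcases lt_or_ge a 0 with ha0 | ha0
    · exact Eventually.of_forall fun x => ha0.trans_le crossingHeight_mem_Icc.1
    obtain ⟨b, hab, hb⟩ := exists_between ha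
    have hpos : 0 < f x₀ b := pos_of_lt_crossingHeight (hcross x₀ hx₀) (ha0.trans hab.le) hb
    filter_upwards [nhdsWithin_le_nhds (continuousAt_const.eventually_lt
      (hf.uncurry_right b).continuousAt hpos)] with x hx
    exact hab.trans_le (le_crossingHeight ⟨ha0.trans hab.le,
      hb.le.trans crossingHeight_mem_Icc.2⟩ hx.le)
  · intro a ha
    rcases lt_or_ge 1 a with ha1 | ha1
    · exact Eventually.of_forall fun x => crossingHeight_mem_Icc.2.trans_lt ha1
    obtain ⟨b, hb, hba⟩ := exists_between ha
    have hneg : f x₀ b < 0 := neg_of_crossingHeight_lt (hba.le.trans ha1) hb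
    filter_upwards [self_mem_nhdsWithin, nhdsWithin_le_nhds
      ((hf.uncurry_right b).continuousAt.eventually_lt continuousAt_const hneg)] with x hx hfx
    refine lt_of_le_of_lt (not_lt.1 fun hbx => ?_) hba
    exact (pos_of_lt_crossingHeight (hcross x hx) (crossingHeight_mem_Icc.1.trans hb.le)
      hbx).not_gt hfx

theorem apply_crossingHeight_eq_zero (hf : Continuous (f x))
    (hcross : CrossesDownOn (f x) (Icc 0 1)) (h0 : 0 < crossingHeight f x)
    (h1 : crossingHeight f x < 1) : f x (crossingHeight f x) = 0 := by
  set c := crossingHeight f x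
  have hlim := hf.continuousAt (x := c)
  refine le_antisymm (le_of_tendsto (hlim.mono_left (nhdsWithin_le_nhds (s := Ioi c))) ?_)
    (ge_of_tendsto (hlim.mono_left (nhdsWithin_le_nhds (s := Iio c))) ?_)
  · filter_upwards [Ioo_mem_nhdsGT h1] with y hy
    exact (neg_of_crossingHeight_lt hy.2.le hy.1).le
  · filter_upwards [Ioo_mem_nhdsLT h0] with y hy
    exact (pos_of_lt_crossingHeight hcross hy.1.le hy.2).le

end crossingHeight

/- A common zero of `f` and `g` is a point `(x, y)` with `f x y = 0 = g y x`: reading `g` with its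
arguments swapped puts the edge conditions of both functions on their first argument, and
`G2_eq_G1` shows that the game is of this form. -/
section CommonZero

variable {f g : ℝ → ℝ → ℝ}

theorem exists_common_zero_of_crossesDownOn (hf : Continuous (uncurry f))
    (hcross : ∀ x ∈ Icc (0 : ℝ) 1, CrossesDownOn (f x) (Icc 0 1)) (hf0 : 0 ≤ f 0 1)
    (hf1 : ∀ y ∈ Icc (0 : ℝ) 1, f 1 y < 0) (hg : Continuous (uncurry g))
    (hg0 : ∀ x ∈ Icc (0 : ℝ) 1, 0 < g 0 x) (hg1 : ∀ x ∈ Icc (0 : ℝ) 1, g 1 x < 0) :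
    ∃ x ∈ Icc (0 : ℝ) 1, ∃ y ∈ Icc (0 : ℝ) 1, f x y = 0 ∧ g y x = 0 := by
  set c := crossingHeight f
  have hc : ContinuousOn (fun x => g (c x) x) (Icc 0 1) :=
    hg.comp_continuousOn ((continuousOn_crossingHeight hf hcross).prodMk continuousOn_id)
  have hc0 : c 0 = 1 := crossingHeight_eq_one hf0
  have hc1 : c 1 = 0 := crossingHeight_eq_zero hf1
  obtain ⟨x, hx, hgx⟩ := intermediate_value_Icc zero_le_one hc
    ⟨by simpa [hc0] using (hg1 0 (left_mem_Icc.2 zero_le_one)).le,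
      by simpa [hc1] using (hg0 1 (right_mem_Icc.2 zero_le_one)).le⟩
  have hcx0 : 0 < c x := crossingHeight_mem_Icc.1.lt_of_ne fun h => (hg0 x hx).ne' (h ▸ hgx)
  have hcx1 : c x < 1 := crossingHeight_mem_Icc.2.lt_of_ne fun h => (hg1 x hx).ne (h ▸ hgx)
  exact ⟨x, hx, c x, crossingHeight_mem_Icc,
    apply_crossingHeight_eq_zero (hf.uncurry_left x) (hcross x hx) hcx0 hcx1, hgx⟩

theorem exists_common_zero_of_crossesUpOn (hf : Continuous (uncurry f))
    (hcross : ∀ x ∈ Icc (0 : ℝ) 1, CrossesUpOn (f x) (Icc 0 1)) (hf0 : 0 ≤ f 0 0)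
    (hf1 : ∀ y ∈ Icc (0 : ℝ) 1, f 1 y < 0) (hg : Continuous (uncurry g))
    (hg0 : ∀ x ∈ Icc (0 : ℝ) 1, 0 < g 0 x) (hg1 : ∀ x ∈ Icc (0 : ℝ) 1, g 1 x < 0) :
    ∃ x ∈ Icc (0 : ℝ) 1, ∃ y ∈ Icc (0 : ℝ) 1, f x y = 0 ∧ g y x = 0 := by
  obtain ⟨x, hx, y, hy, hfxy, hgyx⟩ :=
    exists_common_zero_of_crossesDownOn (f := fun x y => f x (1 - y))
      (g := fun y x => -g (1 - y) x)
      (by fun_prop) (fun x hx => (hcross x hx).crossesDownOn_comp_one_sub) (by simpa using hf0)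
      (fun y hy => hf1 _ (Icc.mem_iff_one_sub_mem.1 hy)) (by fun_prop)
      (fun x hx => by simpa using hg1 x hx) (fun x hx => by simpa using hg0 x hx)
  exact ⟨x, hx, 1 - y, Icc.mem_iff_one_sub_mem.1 hy, hfxy, neg_eq_zero.1 hgyx⟩

theorem exists_common_zero_of_vanishing_column (hf : ∃ a ∈ Icc (0 : ℝ) 1, ∀ y, f a y = 0)
    (hg : Continuous (uncurry g)) (hg0 : ∀ x ∈ Icc (0 : ℝ) 1, 0 ≤ g 0 x)
    (hg1 : ∀ x ∈ Icc (0 : ℝ) 1, g 1 x ≤ 0) :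
    ∃ x ∈ Icc (0 : ℝ) 1, ∃ y ∈ Icc (0 : ℝ) 1, f x y = 0 ∧ g y x = 0 := by
  obtain ⟨a, ha, hfa⟩ := hf
  obtain ⟨y, hy, hgy⟩ := intermediate_value_Icc' zero_le_one
    (hg.uncurry_right a).continuousOn ⟨hg1 a ha, hg0 a ha⟩
  exact ⟨a, ha, y, hy, hfa y, hgy⟩

end CommonZero

theorem G2_eq_G1 (s21 s22 st21 st22 m2 mt2 x y : ℝ) :
    G2 s21 s22 st21 st22 m2 mt2 x y = G1 s22 s21 st22 st21 m2 mt2 y x := by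
  unfold G1 G2; ring

section G1

variable {s11 s12 st11 st12 m1 mt1 x y : ℝ}

theorem continuous_G1 : Continuous (uncurry (G1 s11 s12 st11 st12 m1 mt1)) := by
  unfold G1 uncurry; fun_prop

theorem G1_eq : G1 s11 s12 st11 st12 m1 mt1 x y =
    (1 - x - mt1) * x ^ 2 * (s11 + s12 * (1 - y)) - (x - m1) * (1 - x) ^ 2 * (st11 + st12 * y) := by
  unfold G1; ring

theorem G1_zero_left : G1 s11 s12 st11 st12 m1 mt1 0 y = m1 * (st11 + st12 * y) := by
  rw [G1_eq]; ring

theorem G1_one_left : G1 s11 s12 st11 st12 m1 mt1 1 y = -(mt1 * (s11 + s12 * (1 - y))) := by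
  rw [G1_eq]; ring

theorem G1_sub_G1 (y' : ℝ) : G1 s11 s12 st11 st12 m1 mt1 x y - G1 s11 s12 st11 st12 m1 mt1 x y' =
    (y' - y) * (s12 * ((1 - x - mt1) * x ^ 2) + st12 * ((x - m1) * (1 - x) ^ 2)) := by
  rw [G1_eq, G1_eq]; ring

theorem G1_zero_left_nonneg (hm1 : 0 ≤ m1) (hst11 : 0 < st11) (hst12 : 0 < st12) (hy : 0 ≤ y) :
    0 ≤ G1 s11 s12 st11 st12 m1 mt1 0 y := by
  rw [G1_zero_left]; exact mul_nonneg hm1 (by positivity)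

theorem G1_zero_left_pos (hm1 : 0 < m1) (hst11 : 0 < st11) (hst12 : 0 < st12) (hy : 0 ≤ y) :
    0 < G1 s11 s12 st11 st12 m1 mt1 0 y := by
  rw [G1_zero_left]; exact mul_pos hm1 (by positivity)

theorem G1_one_left_nonpos (hmt1 : 0 ≤ mt1) (hs11 : 0 < s11) (hs12 : 0 < s12) (hy : y ≤ 1) :
    G1 s11 s12 st11 st12 m1 mt1 1 y ≤ 0 := by
  rw [G1_one_left, neg_nonpos]; exact mul_nonneg hmt1 (by nlinarith)

theorem G1_one_left_neg (hmt1 : 0 < mt1) (hs11 : 0 < s11) (hs12 : 0 < s12) (hy : y ≤ 1) :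
    G1 s11 s12 st11 st12 m1 mt1 1 y < 0 := by
  rw [G1_one_left, neg_neg_iff_pos]; exact mul_pos hmt1 (by nlinarith)

theorem G1_pos (hs11 : 0 < s11) (hs12 : 0 < s12) (hst11 : 0 < st11) (hst12 : 0 < st12)
    (hmt1 : 0 < mt1) (hxm : x < m1) (hxmt : x ≤ 1 - mt1) (hy : y ∈ Icc (0 : ℝ) 1) :
    0 < G1 s11 s12 st11 st12 m1 mt1 x y := by
  have hP : 0 ≤ (1 - x - mt1) * x ^ 2 := mul_nonneg (by linarith) (sq_nonneg x)
  have hQ : (x - m1) * (1 - x) ^ 2 < 0 := mul_neg_of_neg_of_pos (by linarith) (by nlinarith)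
  have ha : 0 ≤ s11 + s12 * (1 - y) := by nlinarith [hy.2]
  have hb : 0 < st11 + st12 * y := by nlinarith [hy.1]
  rw [G1_eq]; nlinarith [mul_nonneg hP ha, mul_neg_of_neg_of_pos hQ hb]

theorem G1_neg (hs11 : 0 < s11) (hs12 : 0 < s12) (hst11 : 0 < st11) (hst12 : 0 < st12)
    (hm1 : 0 < m1) (hxm : m1 ≤ x) (hxmt : 1 - mt1 < x) (hy : y ∈ Icc (0 : ℝ) 1) :
    G1 s11 s12 st11 st12 m1 mt1 x y < 0 := by
  have hP : (1 - x - mt1) * x ^ 2 < 0 := mul_neg_of_neg_of_pos (by linarith) (by nlinarith)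
  have hQ : 0 ≤ (x - m1) * (1 - x) ^ 2 := mul_nonneg (by linarith) (sq_nonneg _)
  have ha : 0 < s11 + s12 * (1 - y) := by nlinarith [hy.2]
  have hb : 0 ≤ st11 + st12 * y := by nlinarith [hy.1]
  rw [G1_eq]; nlinarith [mul_neg_of_neg_of_pos hP ha, mul_nonneg hQ hb]

theorem G1_strictAnti (h : 0 < s12 * ((1 - x - mt1) * x ^ 2) + st12 * ((x - m1) * (1 - x) ^ 2)) :
    StrictAnti (G1 s11 s12 st11 st12 m1 mt1 x) := fun y y' hlt => by
  refine sub_pos.1 ?_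
  rw [G1_sub_G1]
  exact mul_pos (sub_pos.2 hlt) h

theorem G1_strictMono (h : s12 * ((1 - x - mt1) * x ^ 2) + st12 * ((x - m1) * (1 - x) ^ 2) < 0) :
    StrictMono (G1 s11 s12 st11 st12 m1 mt1 x) := fun y y' hlt => by
  refine sub_pos.1 ?_
  rw [G1_sub_G1]
  exact mul_pos_of_neg_of_neg (sub_neg.2 hlt) h

theorem G1_crossesDownOn (hs11 : 0 < s11) (hs12 : 0 < s12) (hst11 : 0 < st11) (hst12 : 0 < st12)
    (hm1 : 0 < m1) (hmt1 : 0 < mt1) (hsum : m1 + mt1 < 1) :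
    CrossesDownOn (G1 s11 s12 st11 st12 m1 mt1 x) (Icc 0 1) := by
  intro y hy y' hy' hlt hy'G
  rcases lt_or_ge x m1 with hxm | hxm
  · exact G1_pos hs11 hs12 hst11 hst12 hmt1 hxm (by linarith) hy
  rcases lt_or_ge (1 - mt1) x with hxmt | hxmt
  · exact absurd hy'G (G1_neg hs11 hs12 hst11 hst12 hm1 hxm hxmt hy').not_ge
  have hP : 0 ≤ (1 - x - mt1) * x ^ 2 := mul_nonneg (by linarith) (sq_nonneg x)
  have hQ : 0 ≤ (x - m1) * (1 - x) ^ 2 := mul_nonneg (by linarith) (sq_nonneg _)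
  have hPQ : 0 < (1 - x - mt1) * x ^ 2 ∨ 0 < (x - m1) * (1 - x) ^ 2 := by
    rcases hxmt.lt_or_eq with hxmt | rfl
    · exact .inl (mul_pos (by linarith) (by nlinarith))
    · exact .inr (mul_pos (by linarith) (by nlinarith))
  have hD : 0 < s12 * ((1 - x - mt1) * x ^ 2) + st12 * ((x - m1) * (1 - x) ^ 2) := by
    rcases hPQ with hPQ | hPQ <;> positivity
  exact hy'G.trans_lt (G1_strictAnti hD hlt)

theorem G1_crossesUpOn (hs11 : 0 < s11) (hs12 : 0 < s12) (hst11 : 0 < st11) (hst12 : 0 < st12)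
    (hm1 : m1 ≤ 1) (hmt1 : mt1 ≤ 1) (hsum : 1 < m1 + mt1) :
    CrossesUpOn (G1 s11 s12 st11 st12 m1 mt1 x) (Icc 0 1) := by
  intro y hy y' hy' hlt hyG
  rcases le_or_gt x (1 - mt1) with hxmt | hxmt
  · exact G1_pos hs11 hs12 hst11 hst12 (by linarith) (by linarith) hxmt hy'
  rcases le_or_gt m1 x with hxm | hxm
  · exact absurd hyG (G1_neg hs11 hs12 hst11 hst12 (by linarith) hxm hxmt hy).not_ge
  have hP : (1 - x - mt1) * x ^ 2 < 0 := mul_neg_of_neg_of_pos (by linarith) (by nlinarith)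
  have hQ : (x - m1) * (1 - x) ^ 2 < 0 := mul_neg_of_neg_of_pos (by linarith) (by nlinarith)
  have hD : s12 * ((1 - x - mt1) * x ^ 2) + st12 * ((x - m1) * (1 - x) ^ 2) < 0 := by
    nlinarith [mul_neg_of_pos_of_neg hs12 hP, mul_neg_of_pos_of_neg hst12 hQ]
  exact hyG.trans_lt (G1_strictMono hD hlt)

theorem exists_G1_vanishing_column (hm1 : m1 ∈ Icc (0 : ℝ) 1)
    (h : m1 = 0 ∨ mt1 = 0 ∨ m1 + mt1 = 1) :
    ∃ a ∈ Icc (0 : ℝ) 1, ∀ y, G1 s11 s12 st11 st12 m1 mt1 a y = 0 := by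
  rcases h with h | h | h
  · exact ⟨m1, hm1, fun y => by rw [G1_eq, h]; ring⟩
  · exact ⟨1, right_mem_Icc.2 zero_le_one, fun y => by rw [G1_one_left, h]; ring⟩
  · exact ⟨m1, hm1, fun y => by rw [G1_eq, show mt1 = 1 - m1 by linarith]; ring⟩

end G1

theorem exists_equilibrium
    (s11 s12 s21 s22 st11 st12 st21 st22 m1 mt1 m2 mt2 : ℝ)
    (hs11 : 0 < s11) (hs12 : 0 < s12) (hs21 : 0 < s21) (hs22 : 0 < s22)
    (hst11 : 0 < st11) (hst12 : 0 < st12) (hst21 : 0 < st21) (hst22 : 0 < st22)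
    (hm1 : m1 ∈ Set.Icc (0:ℝ) 1) (hmt1 : mt1 ∈ Set.Icc (0:ℝ) 1)
    (hm2 : m2 ∈ Set.Icc (0:ℝ) 1) (hmt2 : mt2 ∈ Set.Icc (0:ℝ) 1) :
    ∃ x ∈ Set.Icc (0:ℝ) 1, ∃ y ∈ Set.Icc (0:ℝ) 1,
      G1 s11 s12 st11 st12 m1 mt1 x y = 0 ∧ G2 s21 s22 st21 st22 m2 mt2 x y = 0 := by
  simp only [G2_eq_G1]
  by_cases hdeg₁ : m1 = 0 ∨ mt1 = 0 ∨ m1 + mt1 = 1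
  · exact exists_common_zero_of_vanishing_column (exists_G1_vanishing_column hm1 hdeg₁)
      continuous_G1 (fun x hx => G1_zero_left_nonneg hm2.1 hst22 hst21 hx.1)
      (fun x hx => G1_one_left_nonpos hmt2.1 hs22 hs21 hx.2)
  by_cases hdeg₂ : m2 = 0 ∨ mt2 = 0 ∨ m2 + mt2 = 1
  · obtain ⟨y, hy, x, hx, h₂, h₁⟩ := exists_common_zero_of_vanishing_column
      (exists_G1_vanishing_column hm2 hdeg₂) continuous_G1
      (fun y hy => G1_zero_left_nonneg hm1.1 hst11 hst12 hy.1)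
      (fun y hy => G1_one_left_nonpos hmt1.1 hs11 hs12 hy.2)
    exact ⟨x, hx, y, hy, h₁, h₂⟩
  simp only [not_or] at hdeg₁ hdeg₂
  obtain ⟨hm1₀, hmt1₀, hsum₁⟩ := hdeg₁
  obtain ⟨hm2₀, hmt2₀, -⟩ := hdeg₂
  have hf1 : ∀ y ∈ Icc (0 : ℝ) 1, G1 s11 s12 st11 st12 m1 mt1 1 y < 0 := fun y hy =>
    G1_one_left_neg (hmt1.1.lt_of_ne' hmt1₀) hs11 hs12 hy.2
  have hg0 : ∀ x ∈ Icc (0 : ℝ) 1, 0 < G1 s22 s21 st22 st21 m2 mt2 0 x := fun x hx =>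
    G1_zero_left_pos (hm2.1.lt_of_ne' hm2₀) hst22 hst21 hx.1
  have hg1 : ∀ x ∈ Icc (0 : ℝ) 1, G1 s22 s21 st22 st21 m2 mt2 1 x < 0 := fun x hx =>
    G1_one_left_neg (hmt2.1.lt_of_ne' hmt2₀) hs22 hs21 hx.2
  rcases Ne.lt_or_gt hsum₁ with hlt | hgt
  · exact exists_common_zero_of_crossesDownOn continuous_G1
      (fun _ _ => G1_crossesDownOn hs11 hs12 hst11 hst12 (hm1.1.lt_of_ne' hm1₀)
        (hmt1.1.lt_of_ne' hmt1₀) hlt)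
      (G1_zero_left_nonneg hm1.1 hst11 hst12 zero_le_one) hf1 continuous_G1 hg0 hg1
  · exact exists_common_zero_of_crossesUpOn continuous_G1
      (fun _ _ => G1_crossesUpOn hs11 hs12 hst11 hst12 hm1.2 hmt1.2 hgt)
      (G1_zero_left_nonneg hm1.1 hst11 hst12 le_rfl) hf1 continuous_G1 hg0 hg1
end

section
/- For every real σ > 0, the three critical mutation values satisfy the strict chain of inequalities 0 < μ₁(σ) < μ₂(σ) < μ₃(σ) < 1, where μ₁(σ) = (√(2σ² + 4σ + 4) − σ − 2)/σ², μ₂(σ) = 1/(σ + 4), and μ₃(σ) = (σ + 1)/(3σ + 4). -/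
noncomputable def mu1 (σ : ℝ) : ℝ := (Real.sqrt (2 * σ^2 + 4 * σ + 4) - σ - 2) / σ^2

noncomputable def mu2 (σ : ℝ) : ℝ := 1 / (σ + 4)

noncomputable def mu3 (σ : ℝ) : ℝ := (σ + 1) / (3 * σ + 4)

/-!
The radicand of `μ₁` is `(σ + 2)² + σ²`, so its root `s` exceeds `|σ + 2|` and rationalising
the numerator gives `μ₁ = 1 / (s + σ + 2)`. Then `μ₁ < μ₂` reduces to `2 < s`, while
`μ₂ < μ₃ < 1` are inequalities between rational functions of `σ`.
-/

theorem abs_add_two_lt_sqrt {σ : ℝ} (hσ : σ ≠ 0) : |σ + 2| < √(2 * σ ^ 2 + 4 * σ + 4) := by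
  rw [← Real.sqrt_sq_eq_abs]
  exact Real.sqrt_lt_sqrt (sq_nonneg _) (by nlinarith [pow_pos (abs_pos.mpr hσ) 2, sq_abs σ])

theorem mu1_eq_one_div {σ : ℝ} (hσ : σ ≠ 0) :
    mu1 σ = 1 / (√(2 * σ ^ 2 + 4 * σ + 4) + σ + 2) := by
  have hs := abs_add_two_lt_sqrt hσ
  have hsq : √(2 * σ ^ 2 + 4 * σ + 4) ^ 2 = 2 * σ ^ 2 + 4 * σ + 4 := Real.sq_sqrt (by nlinarith)
  have hden : 0 < √(2 * σ ^ 2 + 4 * σ + 4) + σ + 2 := by linarith [neg_abs_le (σ + 2)]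
  rw [mu1, div_eq_div_iff (pow_ne_zero 2 hσ) hden.ne']
  linear_combination hsq

theorem mu1_pos {σ : ℝ} (hσ : σ ≠ 0) : 0 < mu1 σ := by
  rw [mu1_eq_one_div hσ]
  have := abs_add_two_lt_sqrt hσ
  exact one_div_pos.mpr (by linarith [neg_abs_le (σ + 2)])

theorem mu1_lt_mu2 {σ : ℝ} (hσ : 0 < σ) : mu1 σ < mu2 σ := by
  rw [mu1_eq_one_div hσ.ne', mu2]
  have := abs_add_two_lt_sqrt hσ.ne'
  exact one_div_lt_one_div_of_lt (by linarith) (by linarith [le_abs_self (σ + 2)])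

theorem mu2_lt_mu3 {σ : ℝ} (hσ : 0 < σ) : mu2 σ < mu3 σ := by
  rw [mu2, mu3, div_lt_div_iff₀ (by linarith) (by linarith)]
  nlinarith

theorem mu3_lt_one {σ : ℝ} (hσ : -4 / 3 < σ) : mu3 σ < 1 := by
  rw [mu3, div_lt_one (by linarith)]
  linarith

theorem critical_mutation_values_chain (σ : ℝ) (hσ : 0 < σ) :
    0 < mu1 σ ∧ mu1 σ < mu2 σ ∧ mu2 σ < mu3 σ ∧ mu3 σ < 1 :=
  ⟨mu1_pos hσ.ne', mu1_lt_mu2 hσ, mu2_lt_mu3 hσ, mu3_lt_one (by linarith)⟩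
end

section
/- Let σ > 0 and let μ satisfy μ₃(σ) < μ ≤ 1, where μ₃(σ) = (σ + 1)/(3σ + 4). Then the uniform state (1/2, 1/2) is the unique equilibrium of the fully symmetric convergence–divergence game in the unit square: {(x,y) ∈ [0,1] × [0,1] : F₁(x,y) = 0 and F₂(x,y) = 0} = {(1/2, 1/2)}. -/
noncomputable def F1 (σ μ x y : ℝ) : ℝ :=
  ((1 - x) - μ) * x * (x + σ * x * (1 - y)) - (x - μ) * (1 - x) * ((1 - x) + σ * (1 - x) * y)

noncomputable def F2 (σ μ x y : ℝ) : ℝ :=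
  ((1 - y) - μ) * y * (y + σ * y * (1 - x)) - (y - μ) * (1 - y) * ((1 - y) + σ * (1 - y) * x)

/-!
In the centred coordinates `u = 2x - 1`, `v = 2y - 1` the equilibrium equations read
`u · A(u) = v · B(u)` and `v · A(v) = u · B(v)`, with `A = selfTerm σ μ` and `B = crossTerm σ μ`
affine in `u²`. The hypothesis `μ > (σ + 1)/(3σ + 4)` is exactly what makes `|B(u)| < A(u)` on
`[-1, 1]` (it suffices to check `u² = 0` and `u² = 1`). Then the first equation gives `|u| ≤ |v|`,
the second `|v| ≤ |u|`, and equality forces `u = v = 0`.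
-/

open Set

def selfTerm (σ μ u : ℝ) : ℝ := (2 + σ) * (4 * μ - 1 + u ^ 2)

def crossTerm (σ μ u : ℝ) : ℝ := σ * ((1 + 2 * μ) * u ^ 2 - (1 - 2 * μ))

lemma F1_eq_centered (σ μ x y : ℝ) :
    F1 σ μ x y = ((2 * y - 1) * crossTerm σ μ (2 * x - 1)
      - (2 * x - 1) * selfTerm σ μ (2 * x - 1)) / 8 := by
  unfold F1 selfTerm crossTerm
  ring

lemma F2_eq_F1_swap (σ μ x y : ℝ) : F2 σ μ x y = F1 σ μ y x := rfl

lemma pos_add_mul_of_mem_Icc {a b s : ℝ} (ha : 0 < a) (hab : 0 < a + b)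
    (hs : s ∈ Icc (0 : ℝ) 1) : 0 < a + b * s := by
  simpa [mul_comm] using (convex_Ioi (0 : ℝ)).add_smul_mem ha hab hs

lemma abs_crossTerm_lt_selfTerm {σ μ u : ℝ} (hσ : 0 < σ) (hμ : σ + 1 < μ * (3 * σ + 4))
    (hu : |u| ≤ 1) : |crossTerm σ μ u| < selfTerm σ μ u := by
  have hs : u ^ 2 ∈ Icc (0 : ℝ) 1 := ⟨sq_nonneg u, by nlinarith [abs_le.1 hu]⟩
  have hμ' : 1 < μ * (σ + 4) := by nlinarith
  unfold crossTerm selfTerm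
  rw [abs_lt]
  constructor
  · nlinarith [pos_add_mul_of_mem_Icc (a := 2 * (μ * (3 * σ + 4) - (σ + 1)))
      (b := 2 * (1 + σ + σ * μ)) (by linarith) (by nlinarith) hs]
  · nlinarith [pos_add_mul_of_mem_Icc (a := 2 * (μ * (σ + 4) - 1))
      (b := 2 - 2 * σ * μ) (by linarith) (by nlinarith) hs]

lemma abs_le_abs_of_mul_eq_mul {a b u v : ℝ} (hba : |b| < a) (h : u * a = v * b) :
    |u| ≤ |v| := by
  have ha : 0 < a := (abs_nonneg b).trans_lt hba
  refine le_of_mul_le_mul_right ?_ ha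
  calc |u| * a = |v| * |b| := by rw [← abs_of_pos ha, ← abs_mul, ← abs_mul, h]
    _ ≤ |v| * a := by gcongr

lemma eq_zero_of_mul_eq_mul_swap {a b c d u v : ℝ} (hba : |b| < a) (hdc : |d| < c)
    (huv : u * a = v * b) (hvu : v * c = u * d) : u = 0 ∧ v = 0 := by
  have huv_abs : |u| = |v| :=
    le_antisymm (abs_le_abs_of_mul_eq_mul hba huv) (abs_le_abs_of_mul_eq_mul hdc hvu)
  have hu : u = 0 := by
    by_contra hu
    have : |u| * a = |u| * |b| := by
      rw [← abs_of_pos ((abs_nonneg b).trans_lt hba), ← abs_mul, huv, abs_mul, huv_abs]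
    exact hba.ne' (mul_left_cancel₀ (abs_ne_zero.2 hu) this)
  exact ⟨hu, abs_eq_zero.1 (by rw [← huv_abs, hu, abs_zero])⟩

theorem phase_I_unique_equilibrium_general (σ μ : ℝ) (hσ : 0 < σ)
    (hlo : (σ + 1) / (3 * σ + 4) < μ) :
    {p : ℝ × ℝ | p ∈ Set.Icc (0:ℝ) 1 ×ˢ Set.Icc (0:ℝ) 1 ∧
        F1 σ μ p.1 p.2 = 0 ∧ F2 σ μ p.1 p.2 = 0} = {(1/2, 1/2)} := by
  have hμ : σ + 1 < μ * (3 * σ + 4) := by rwa [div_lt_iff₀ (by linarith)] at hlo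
  ext ⟨x, y⟩
  simp only [mem_ofPred_eq, mem_prod, mem_Icc, mem_singleton_iff, Prod.mk.injEq,
    F2_eq_F1_swap, F1_eq_centered]
  constructor
  · rintro ⟨⟨⟨hx0, hx1⟩, hy0, hy1⟩, hxy, hyx⟩
    have hu : |2 * x - 1| ≤ 1 := abs_le.2 ⟨by linarith, by linarith⟩
    have hv : |2 * y - 1| ≤ 1 := abs_le.2 ⟨by linarith, by linarith⟩
    obtain ⟨hu0, hv0⟩ := eq_zero_of_mul_eq_mul_swap (u := 2 * x - 1) (v := 2 * y - 1)
      (abs_crossTerm_lt_selfTerm hσ hμ hu) (abs_crossTerm_lt_selfTerm hσ hμ hv)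
      (by linarith) (by linarith)
    constructor <;> linarith
  · rintro ⟨rfl, rfl⟩
    norm_num

theorem phase_I_unique_equilibrium (σ μ : ℝ) (hσ : 0 < σ)
    (hlo : (σ + 1) / (3 * σ + 4) < μ) (hhi : μ ≤ 1) :
    {p : ℝ × ℝ | p ∈ Set.Icc (0:ℝ) 1 ×ˢ Set.Icc (0:ℝ) 1 ∧
        F1 σ μ p.1 p.2 = 0 ∧ F2 σ μ p.1 p.2 = 0} = {(1/2, 1/2)} :=
  phase_I_unique_equilibrium_general σ μ hσ hlo
end

section
/- For all real σ and μ, the map F : ℝ × ℝ → ℝ × ℝ, F(x,y) = (F₁(x,y), F₂(x,y)), is differentiable at (1/2, 1/2), and its Fréchet derivative there has eigenvector (1, 1) with eigenvalue λ_D = 1/2 − (σ + 4)·μ/2 and eigenvector (1, −1) with eigenvalue λ_D̃ = (σ + 1)/2 − (3σ + 4)·μ/2; that is, the derivative maps (1,1) to λ_D·(1,1) and (1,−1) to λ_D̃·(1,−1). -/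
noncomputable def F (σ μ : ℝ) : ℝ × ℝ → ℝ × ℝ :=
  fun p => (F1 σ μ p.1 p.2, F2 σ μ p.1 p.2)

/-! `F` restricts to an odd cubic along both the diagonal and the antidiagonal through the uniform
state `(1/2, 1/2)`, each time with values on that same line; the linear coefficient of the cubic is
the derivative of `F` in that direction. -/

section LineDeriv

variable {𝕜 E G : Type*} [NontriviallyNormedField 𝕜]
  [NormedAddCommGroup E] [NormedSpace 𝕜 E] [NormedAddCommGroup G] [NormedSpace 𝕜 G]
  {f : E → G} {x v : E} {a b : G}

theorem hasLineDerivAt_of_eq_add_smul_add_pow_three_smul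
    (h : ∀ t : 𝕜, f (x + t • v) = f x + t • a + t ^ 3 • b) : HasLineDerivAt 𝕜 f a x v := by
  have hcubic : HasDerivAt (fun t : 𝕜 => f x + t • a + t ^ 3 • b) a 0 := by
    refine ((((hasDerivAt_id (0 : 𝕜)).smul_const a).const_add (f x)).add
      ((hasDerivAt_pow 3 (0 : 𝕜)).smul_const b)).congr_deriv ?_
    simp
  exact hcubic.congr_of_eventuallyEq (Filter.Eventually.of_forall h)

theorem fderiv_apply_eq_of_eq_add_smul_add_pow_three_smul (hf : DifferentiableAt 𝕜 f x)
    (h : ∀ t : 𝕜, f (x + t • v) = f x + t • a + t ^ 3 • b) : fderiv 𝕜 f x v = a :=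
  (hf.hasFDerivAt.hasLineDerivAt v).unique (hasLineDerivAt_of_eq_add_smul_add_pow_three_smul h)

end LineDeriv

theorem differentiable_F (σ μ : ℝ) : Differentiable ℝ (F σ μ) := by
  unfold F F1 F2
  fun_prop

theorem F_add_smul_diagonal (σ μ t : ℝ) :
    F σ μ ((1/2, 1/2) + t • (1, 1)) = F σ μ (1/2, 1/2) +
      t • ((1/2 - (σ + 4) * μ / 2) • ((1 : ℝ), (1 : ℝ))) +
      t ^ 3 • ((2 * σ * μ - 2) • ((1 : ℝ), (1 : ℝ))) := by
  ext <;> simp only [F, F1, F2, Prod.smul_mk, smul_eq_mul, Prod.mk_add_mk] <;> ring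

theorem F_add_smul_antidiagonal (σ μ t : ℝ) :
    F σ μ ((1/2, 1/2) + t • (1, -1)) = F σ μ (1/2, 1/2) +
      t • (((σ + 1)/2 - (3 * σ + 4) * μ / 2) • ((1 : ℝ), (-1 : ℝ))) +
      t ^ 3 • ((-2 - 2 * σ - 2 * σ * μ) • ((1 : ℝ), (-1 : ℝ))) := by
  ext <;> simp only [F, F1, F2, Prod.smul_mk, smul_eq_mul, Prod.mk_add_mk] <;> ring

theorem jacobian_at_uniform_state (σ μ : ℝ) :
    DifferentiableAt ℝ (F σ μ) (1/2, 1/2) ∧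
    fderiv ℝ (F σ μ) (1/2, 1/2) (1, 1) =
      (1/2 - (σ + 4) * μ / 2) • ((1 : ℝ), (1 : ℝ)) ∧
    fderiv ℝ (F σ μ) (1/2, 1/2) (1, -1) =
      ((σ + 1)/2 - (3 * σ + 4) * μ / 2) • ((1 : ℝ), (-1 : ℝ)) := by
  have hF : DifferentiableAt ℝ (F σ μ) (1/2, 1/2) := (differentiable_F σ μ).differentiableAt
  exact ⟨hF, fderiv_apply_eq_of_eq_add_smul_add_pow_three_smul hF (F_add_smul_diagonal σ μ),
    fderiv_apply_eq_of_eq_add_smul_add_pow_three_smul hF (F_add_smul_antidiagonal σ μ)⟩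
end
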